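/- Let G be a compact Lie group and let P be a p-discretization of a p-toral subgroup 𝐏 of G. Then the natural map Out_G(P) := N_G(P)/(C_G(P)·P) → N_G(𝐏)/(C_G(𝐏)·𝐏) =: Out_G(𝐏), induced by the inclusion N_G(P) ⊆ N_G(𝐏) (an element normalizing P normalizes its closure 𝐏, and C_G(P) = C_G(𝐏)), is a group isomorphism. -/

import Mathlib

open scoped Pointwise
open CategoryTheory

noncomputable section

/-- The Prüfer `p`-group `ℤ/p^∞`, realized as the subgroup of the circle group
consisting of the elements of `p`-power order. -/
def PruferGroup (p : ℕ) : Subgroup Circle where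
  carrier := {x | ∃ n : ℕ, x ^ p ^ n = 1}
  one_mem' := ⟨0, one_pow _⟩
  mul_mem' := by
    rintro a b ⟨n, hn⟩ ⟨m, hm⟩
    refine ⟨n + m, ?_⟩
    rw [mul_pow, pow_add, pow_mul, hn, one_pow, one_mul, mul_comm (p ^ n), pow_mul, hm, one_pow]
  inv_mem' := by
    rintro a ⟨n, hn⟩
    exact ⟨n, by rw [inv_pow, hn, inv_one]⟩

/-- A group is a discrete `p`-torus of rank `r` if it is isomorphic to `(ℤ/p^∞)^r`. -/
def IsDiscretePTorusOfRank (p r : ℕ) (T : Type*) [Group T] : Prop :=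
  Nonempty (T ≃* (Fin r → PruferGroup p))

/-- A group is discrete `p`-toral (of rank `r`, for some `r`) if it is an extension of a
discrete `p`-torus of rank `r` by a finite `p`-group. -/
def IsDiscretePToral (p : ℕ) (P : Type*) [Group P] : Prop :=
  ∃ (r : ℕ) (T : Subgroup P) (hT : T.Normal),
    IsDiscretePTorusOfRank p r T ∧
    (letI := hT; Finite (P ⧸ T) ∧ IsPGroup p (P ⧸ T))

/-- A topological group is a (continuous) torus of rank `r` if it is isomorphic, as a
topological group, to `(S¹)^r`. -/
def IsTorusOfRank (r : ℕ) (T : Type*) [Group T] [TopologicalSpace T] : Prop :=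
  ∃ e : T ≃* (Fin r → Circle), Continuous e ∧ Continuous e.symm

/-- A topological group is `p`-toral of rank `r` if it is a compact group which is an
extension of a torus of rank `r` (its identity component, the maximal torus) by a
finite `p`-group. -/
def IsPToral (p : ℕ) (P : Type*) [Group P] [TopologicalSpace P] [IsTopologicalGroup P] : Prop :=
  CompactSpace P ∧
    ∃ r : ℕ, IsTorusOfRank r (Subgroup.connectedComponentOfOne P) ∧
      ∃ hN : (Subgroup.connectedComponentOfOne P).Normal,
        letI := hN
        Finite (P ⧸ Subgroup.connectedComponentOfOne P) ∧
          IsPGroup p (P ⧸ Subgroup.connectedComponentOfOne P)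

/-- `P` is a maximal discrete `p`-toral subgroup of the subgroup `B`: it is a discrete
`p`-toral subgroup contained in `B`, maximal among discrete `p`-toral subgroups of `B`. -/
def IsMaxDiscretePToralIn (p : ℕ) {G : Type*} [Group G] (P B : Subgroup G) : Prop :=
  P ≤ B ∧ IsDiscretePToral p P ∧
    ∀ Q : Subgroup G, Q ≤ B → IsDiscretePToral p Q → P ≤ Q → Q = P

/-- `P` is a maximal discrete `p`-toral subgroup of `G`. -/
def IsMaxDiscretePToral (p : ℕ) {G : Type*} [Group G] (P : Subgroup G) : Prop :=
  IsMaxDiscretePToralIn p P ⊤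

/-- The image of a subgroup under the conjugation `c_g(x) = g⁻¹ x g`. -/
def conjSubgroup {G : Type*} [Group G] (g : G) (P : Subgroup G) : Subgroup G :=
  Subgroup.map ((MulAut.conj g⁻¹).toMonoidHom) P

/-- A `p`-toral subgroup of a topological group: a closed subgroup which is `p`-toral
as a topological group with the subspace topology. -/
def IsPToralSubgroup (p : ℕ) {G : Type*} [Group G] [TopologicalSpace G] [IsTopologicalGroup G]
    (P : Subgroup G) : Prop :=
  IsClosed (P : Set G) ∧ IsPToral p P

/-- A maximal `p`-toral subgroup of `G`. -/
def IsMaxPToralSubgroup (p : ℕ) {G : Type*} [Group G] [TopologicalSpace G] [IsTopologicalGroup G]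
    (S : Subgroup G) : Prop :=
  IsPToralSubgroup p S ∧ ∀ Q : Subgroup G, IsPToralSubgroup p Q → S ≤ Q → Q = S

/-- A discrete `p`-toral subgroup `P` of `G` is snugly embedded if it is a maximal
discrete `p`-toral subgroup of its closure. -/
def IsSnug (p : ℕ) {G : Type*} [Group G] [TopologicalSpace G] [IsTopologicalGroup G]
    (P : Subgroup G) : Prop :=
  IsMaxDiscretePToralIn p P P.topologicalClosure

/-- `P` is a `p`-discretization of the `p`-toral subgroup `𝐏` of `G`: a snugly embedded
discrete `p`-toral subgroup of `𝐏` whose closure equals `𝐏`; equivalently, a maximal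
discrete `p`-toral subgroup of `𝐏` whose closure equals `𝐏`. -/
def IsPDiscretizationOf (p : ℕ) {G : Type*} [Group G] [TopologicalSpace G] [IsTopologicalGroup G]
    (P Pbold : Subgroup G) : Prop :=
  P.topologicalClosure = Pbold ∧ IsMaxDiscretePToralIn p P Pbold


/-!
Let `𝐓` be the identity component of `𝐏`, a divisible abelian normal subgroup of `p`-power index
whose `p ^ m`-torsion is finite. As `𝐓` is open and `P` dense in `𝐏`, `𝐏 = 𝐓 P`. Maximality
forces `P` to contain the `p`-power torsion of `𝐓`, so `P ∩ 𝐓` is exactly that torsion and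
`P / (P ∩ 𝐓)`, which embeds in `𝐏 / 𝐓`, is a finite `p`-group of some order `N`.

Continuity of conjugation gives `N_G(P) ≤ N_G(𝐏)` and `C_G(P) = C_G(𝐏)`. The two remaining
claims are vanishing statements for `1`-cocycles of `P` that are trivial on `P ∩ 𝐓`: averaging
such a cocycle over `P / (P ∩ 𝐓)` shows that its `N`-th power is a coboundary, and divisibility
of `𝐓` together with the root-closedness of `P ∩ 𝐓` in `𝐓` removes the `N`-th power. This
shows that an element of `𝐓` normalizing `P` acts on `P` as an element of `P` (injectivity), and
that any two `p`-discretizations of `𝐏`, such as `P` and `g P g⁻¹` for `g ∈ N_G(𝐏)`, are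
conjugate by an element of `𝐓` (surjectivity).
-/

open Subgroup

/-! ### Tori and discrete tori -/

theorem Circle.exists_pow_eq (z : Circle) {n : ℕ} (hn : n ≠ 0) : ∃ w : Circle, w ^ n = z := by
  obtain ⟨t, rfl⟩ := Circle.exp_surjective z
  exact ⟨Circle.exp (t / n), by
    rw [← Circle.exp_natCast_mul, mul_div_cancel₀ _ (Nat.cast_ne_zero.mpr hn)]⟩

theorem Circle.finite_setOf_pow_eq_one {n : ℕ} (hn : n ≠ 0) : {z : Circle | z ^ n = 1}.Finite := by
  refine ((Polynomial.nthRoots n (1 : ℂ)).toFinset.finite_toSet.preimage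
    Circle.coe_injective.injOn).subset fun z hz => ?_
  simp only [Set.mem_preimage, Finset.mem_coe, Multiset.mem_toFinset,
    Polynomial.mem_nthRoots (Nat.pos_of_ne_zero hn)]
  exact_mod_cast congrArg ((↑) : Circle → ℂ) hz

section Torus

variable {r : ℕ} {T : Type*} [Group T] [TopologicalSpace T]

theorem IsTorusOfRank.isMulCommutative (h : IsTorusOfRank r T) : IsMulCommutative T := by
  obtain ⟨e, -⟩ := h
  exact isMulCommutative_iff.mpr fun a b => e.injective (by rw [map_mul, map_mul, mul_comm])

theorem IsTorusOfRank.exists_pow_eq (h : IsTorusOfRank r T) (x : T) {n : ℕ} (hn : n ≠ 0) :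
    ∃ y : T, y ^ n = x := by
  obtain ⟨e, -⟩ := h
  choose w hw using fun i => (e x i).exists_pow_eq hn
  exact ⟨e.symm w, e.injective (by rw [map_pow, e.apply_symm_apply]; exact funext hw)⟩

theorem IsTorusOfRank.finite_setOf_pow_eq_one (h : IsTorusOfRank r T) {n : ℕ} (hn : n ≠ 0) :
    {x : T | x ^ n = 1}.Finite := by
  obtain ⟨e, -⟩ := h
  refine ((Set.Finite.pi fun _ => Circle.finite_setOf_pow_eq_one hn).preimage
    e.injective.injOn).subset fun x hx i _ => ?_
  show e x i ^ n = 1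
  rw [← Pi.pow_apply, ← map_pow, show x ^ n = 1 from hx, map_one, Pi.one_apply]

end Torus

theorem PruferGroup.exists_pow_pow_eq {p : ℕ} (hp : p ≠ 0) (z : PruferGroup p) (k : ℕ) :
    ∃ w : PruferGroup p, w ^ p ^ k = z := by
  obtain ⟨m, hm⟩ := z.2
  obtain ⟨w, hw⟩ := Circle.exists_pow_eq (z : Circle) (pow_ne_zero k hp)
  exact ⟨⟨w, k + m, by rw [pow_add, pow_mul, hw, hm]⟩, Subtype.ext hw⟩

theorem PruferGroup.isPGroup (p : ℕ) : IsPGroup p (PruferGroup p) :=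
  fun z => z.2.imp fun _ hm => Subtype.ext hm

theorem IsPGroup.pi {p : ℕ} {ι : Type*} [Finite ι] {H : ι → Type*} [∀ i, Group (H i)]
    (h : ∀ i, IsPGroup p (H i)) : IsPGroup p (∀ i, H i) := by
  intro f
  choose k hk using fun i => h i (f i)
  have := Fintype.ofFinite ι
  refine ⟨Finset.univ.sup k, funext fun i => ?_⟩
  obtain ⟨c, hc⟩ := pow_dvd_pow p (Finset.le_sup (f := k) (Finset.mem_univ i))
  simp [hc, pow_mul, hk]

theorem IsDiscretePTorusOfRank.exists_pow_pow_eq {p r : ℕ} (hp : p ≠ 0) {S : Type*} [Group S]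
    (h : IsDiscretePTorusOfRank p r S) (x : S) (k : ℕ) : ∃ z : S, z ^ p ^ k = x := by
  obtain ⟨e⟩ := h
  choose w hw using fun i => PruferGroup.exists_pow_pow_eq hp (e x i) k
  exact ⟨e.symm w, e.injective (by rw [map_pow, e.apply_symm_apply]; exact funext hw)⟩

/-! ### Discrete `p`-toral groups -/

section DiscretePToral

variable {p : ℕ}

theorem IsDiscretePToral.isPGroup {H : Type*} [Group H] (h : IsDiscretePToral p H) :
    IsPGroup p H := by
  obtain ⟨r, T, hT, ⟨e⟩, -, hq⟩ := h
  have hTp : IsPGroup p T := (IsPGroup.pi fun _ => PruferGroup.isPGroup p).of_equiv e.symm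
  intro x
  obtain ⟨j, hj⟩ := hq x
  rw [← QuotientGroup.mk_pow, QuotientGroup.eq_one_iff] at hj
  obtain ⟨l, hl⟩ := hTp ⟨_, hj⟩
  exact ⟨j + l, by rw [pow_add, pow_mul]; exact congrArg Subtype.val hl⟩

theorem IsDiscretePToral.of_mulEquiv {H K : Type*} [Group H] [Group K] (e : H ≃* K)
    (h : IsDiscretePToral p H) : IsDiscretePToral p K := by
  obtain ⟨r, T, hT, ⟨eT⟩, hfin, hq⟩ := h
  have := hT.map e.toMonoidHom e.surjective
  let q : H ⧸ T ≃* K ⧸ T.map e.toMonoidHom := QuotientGroup.congr T _ e rfl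
  exact ⟨r, T.map e.toMonoidHom, this,
    ⟨(T.equivMapOfInjective _ e.injective).symm.trans eT⟩, .of_equiv _ q.toEquiv, hq.of_equiv q⟩

theorem IsDiscretePTorusOfRank.isDiscretePToral_of_le {r : ℕ} {B : Type*} [Group B]
    {S Q : Subgroup B} (hS : IsDiscretePTorusOfRank p r S) (hSQ : S ≤ Q)
    (hQS : Q ≤ normalizer (S : Set B)) (hfin : S.relIndex Q ≠ 0) (hQ : IsPGroup p Q) :
    IsDiscretePToral p Q := by
  obtain ⟨e⟩ := hS
  have := (normal_subgroupOf_iff_le_normalizer hSQ).mpr hQS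
  exact ⟨r, S.subgroupOf Q, this, ⟨(subgroupOfEquivOfLe hSQ).trans e⟩,
    index_ne_zero_iff_finite.mp hfin, hQ.to_quotient _⟩

theorem IsMaxDiscretePToralIn.map {G G' : Type*} [Group G] [Group G'] {P B : Subgroup G}
    (h : IsMaxDiscretePToralIn p P B) (e : G ≃* G') :
    IsMaxDiscretePToralIn p (P.map e.toMonoidHom) (B.map e.toMonoidHom) := by
  obtain ⟨hPB, hP, hmax⟩ := h
  refine ⟨map_mono hPB, hP.of_mulEquiv (P.equivMapOfInjective _ e.injective),
    fun Q hQB hQ hPQ => ?_⟩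
  have hQ' : (Q.comap e.toMonoidHom).map e.toMonoidHom = Q :=
    map_comap_eq_self_of_surjective e.surjective Q
  have hB : (B.map e.toMonoidHom).comap e.toMonoidHom = B :=
    comap_map_eq_self_of_injective e.injective B
  rw [← hQ'] at hQ
  have := hmax _ (hB ▸ comap_mono hQB)
    (hQ.of_mulEquiv ((Q.comap e.toMonoidHom).equivMapOfInjective _ e.injective).symm)
    (map_le_iff_le_comap.mp hPQ)
  rw [← hQ', this]

theorem IsMaxDiscretePToralIn.isMaxDiscretePToral_subgroupOf {G : Type*} [Group G]
    {P B : Subgroup G} (h : IsMaxDiscretePToralIn p P B) :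
    IsMaxDiscretePToral p (P.subgroupOf B) := by
  obtain ⟨hPB, hP, hmax⟩ := h
  refine ⟨le_top, hP.of_mulEquiv (subgroupOfEquivOfLe hPB).symm, fun Q _ hQ hPQ => ?_⟩
  have := hmax (Q.map B.subtype) (map_subtype_le Q)
    (hQ.of_mulEquiv (Q.equivMapOfInjective _ B.subtype_injective))
    (by simpa [subgroupOf_map_subtype, hPB] using map_mono (f := B.subtype) hPQ)
  rw [← comap_map_eq_self_of_injective B.subtype_injective Q, this]
  rfl

end DiscretePToral

theorem Subgroup.relIndex_sup_ne_zero_of_finite {B : Type*} [Group B] (P F : Subgroup B)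
    [F.Normal] [Finite F] : P.relIndex (P ⊔ F) ≠ 0 := by
  rw [relIndex, index_ne_zero_iff_finite]
  refine Finite.of_surjective (fun f : F => (⟨f, mem_sup_right f.2⟩ : ↥(P ⊔ F))) fun q => ?_
  induction q using QuotientGroup.induction_on with | H y => ?_
  have hy : (y : B) ∈ (F : Set B) * P := by rw [← normal_mul, sup_comm]; exact y.2
  obtain ⟨f, hf, a, ha, hfa⟩ := hy
  refine ⟨⟨f, hf⟩, QuotientGroup.eq.mpr ?_⟩
  simpa [mem_subgroupOf, ← hfa] using ha

/-! ### Averaging cocycles -/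

section Cocycle

variable {Γ M : Type*} [Group Γ] [CommGroup M]

theorem exists_pow_index_eq_div_of_cocycle (ρ : Γ → M →* M) {f : Γ → M}
    (hf : ∀ x y, f (x * y) = f x * ρ x (f y)) (K : Subgroup Γ) [K.FiniteIndex]
    (hK : ∀ k ∈ K, f k = 1) (S : Subgroup M) (hS : ∀ x, f x ∈ S) :
    ∃ m ∈ S, ∀ x, f x ^ K.index = m / ρ x m := by
  have := Fintype.ofFinite (Γ ⧸ K)
  let f' : Γ ⧸ K → M := Quotient.lift f fun x y hxy => by
    rw [← mul_inv_cancel_left x y, hf, hK _ (QuotientGroup.leftRel_apply.mp hxy), map_one, mul_one]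
  have hf' : ∀ x q, f' (x • q) = f x * ρ x (f' q) := by
    intro x q
    induction q using QuotientGroup.induction_on with | H y => exact hf x y
  refine ⟨∏ q, f' q, prod_mem fun q _ => ?_, fun x => ?_⟩
  · induction q using QuotientGroup.induction_on with | H y => exact hS y
  rw [eq_div_iff_mul_eq', map_prod, index_eq_card, Nat.card_eq_fintype_card, ← Finset.card_univ,
    ← Finset.prod_const, ← Finset.prod_mul_distrib]
  simp_rw [← hf']
  exact Fintype.prod_equiv (MulAction.toPerm x) _ _ fun _ => rfl

theorem exists_pow_index_eq_div_mod_of_cocycle (S : Subgroup M) (ρ : Γ → M →* M)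
    (hρ : ∀ x, S ≤ S.comap (ρ x)) {f : Γ → M} (hf : ∀ x y, (f x * ρ x (f y))⁻¹ * f (x * y) ∈ S)
    (K : Subgroup Γ) [K.FiniteIndex] (hK : ∀ k ∈ K, f k ∈ S) :
    ∃ m, ∀ x, (f x ^ K.index)⁻¹ * (m / ρ x m) ∈ S := by
  obtain ⟨m, -, hm⟩ := exists_pow_index_eq_div_of_cocycle
    (fun x => QuotientGroup.map S S (ρ x) (hρ x)) (f := fun x => (f x : M ⧸ S))
    (fun x y => (QuotientGroup.eq.mpr (hf x y)).symm) K
    (fun k hk => (QuotientGroup.eq_one_iff _).mpr (hK k hk)) ⊤ fun _ => mem_top _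
  obtain ⟨m, rfl⟩ := QuotientGroup.mk_surjective m
  exact ⟨m, fun x => QuotientGroup.eq.mp (hm x)⟩

end Cocycle

/-! ### The identity component of a `p`-toral group -/

/-- The properties of the identity component `T` of a `p`-toral group that the argument uses. -/
structure IsPToralCore (p : ℕ) {B : Type*} [Group B] (T : Subgroup B) : Prop where
  normal : T.Normal
  isMulCommutative : IsMulCommutative T
  exists_pow_eq : ∀ x ∈ T, ∀ n ≠ 0, ∃ y ∈ T, y ^ n = x
  finite_setOf_pow_eq_one : ∀ m, {x : T | x ^ p ^ m = 1}.Finite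
  index_eq_pow : ∃ k, T.index = p ^ k

namespace IsPToralCore

open scoped IsMulCommutative commutatorElement

variable {p : ℕ} {B : Type*} [Group B] {T : Subgroup B}

theorem commute (hT : IsPToralCore p T) {x y : B} (hx : x ∈ T) (hy : y ∈ T) : Commute x y :=
  have := hT.isMulCommutative
  setLike_mul_comm hx hy

theorem conj_mem (hT : IsPToralCore p T) {x : B} (hx : x ∈ T) (g : B) : g * x * g⁻¹ ∈ T :=
  hT.normal.conj_mem x hx g

theorem finiteIndex [Fact p.Prime] (hT : IsPToralCore p T) : T.FiniteIndex :=
  ⟨by obtain ⟨k, hk⟩ := hT.index_eq_pow; exact hk ▸ pow_ne_zero _ (Fact.out : p.Prime).ne_zero⟩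

theorem exists_relIndex_eq_pow [Fact p.Prime] (hT : IsPToralCore p T) (P : Subgroup B) :
    ∃ j, T.relIndex P = p ^ j := by
  have := hT.normal
  obtain ⟨k, hk⟩ := hT.index_eq_pow
  obtain ⟨j, -, hj⟩ := (Nat.dvd_prime_pow Fact.out).mp (hk ▸ T.relIndex_dvd_index_of_normal P)
  exact ⟨j, hj⟩

theorem map_subtype_le_of_isDiscretePTorusOfRank [Fact p.Prime] (hT : IsPToralCore p T)
    {P : Subgroup B} {r : ℕ} {S : Subgroup P} (hS : IsDiscretePTorusOfRank p r S) :
    S.map P.subtype ≤ T := by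
  have := hT.normal
  obtain ⟨k, hk⟩ := hT.index_eq_pow
  rintro _ ⟨y, hy, rfl⟩
  obtain ⟨z, hz⟩ := hS.exists_pow_pow_eq (Fact.out : p.Prime).ne_zero ⟨y, hy⟩ k
  have : ((z : P) : B) ^ T.index = y := by
    rw [hk]; exact congrArg (fun w : S => ((w : P) : B)) hz
  simpa [this] using T.pow_index_mem ((z : P) : B)

def torsion (hT : IsPToralCore p T) (m : ℕ) : Subgroup B where
  carrier := {x | x ∈ T ∧ x ^ p ^ m = 1}
  mul_mem' := fun ⟨hx, hx'⟩ ⟨hy, hy'⟩ =>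
    ⟨mul_mem hx hy, by rw [(hT.commute hx hy).mul_pow, hx', hy', one_mul]⟩
  one_mem' := ⟨one_mem T, one_pow _⟩
  inv_mem' := fun ⟨hx, hx'⟩ => ⟨inv_mem hx, by rw [inv_pow, hx', inv_one]⟩

theorem torsion_le (hT : IsPToralCore p T) (m : ℕ) : hT.torsion m ≤ T := fun _ hx => hx.1

instance normal_torsion (hT : IsPToralCore p T) (m : ℕ) : (hT.torsion m).Normal :=
  ⟨fun _ ⟨hx, hx'⟩ g => ⟨hT.conj_mem hx g, by rw [conj_pow, hx', mul_one, mul_inv_cancel]⟩⟩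

instance finite_torsion (hT : IsPToralCore p T) (m : ℕ) : Finite (hT.torsion m) := by
  refine Set.Finite.to_subtype (((hT.finite_setOf_pow_eq_one m).image Subtype.val).subset ?_)
  exact fun x ⟨hx, hx'⟩ => ⟨⟨x, hx⟩, Subtype.ext hx', rfl⟩

theorem isPGroup_torsion (hT : IsPToralCore p T) (m : ℕ) : IsPGroup p (hT.torsion m) :=
  fun x => ⟨m, Subtype.ext x.2.2⟩

/-- `P ⊔ hT.torsion m` is discrete `p`-toral, so it equals `P` by maximality. -/
theorem mem_of_pow_eq_one [Fact p.Prime] (hT : IsPToralCore p T) {P : Subgroup B}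
    (hP : IsMaxDiscretePToral p P) {x : B} (hx : x ∈ T) {m : ℕ} (hm : x ^ p ^ m = 1) :
    x ∈ P := by
  obtain ⟨-, hPdpt, hmax⟩ := hP
  obtain ⟨r, S, hS, ⟨e⟩, hSfin, -⟩ := id hPdpt
  let F := hT.torsion m
  have hST : S.map P.subtype ≤ T := hT.map_subtype_le_of_isDiscretePTorusOfRank ⟨e⟩
  have hQ : IsDiscretePToral p ↥(P ⊔ F) := by
    refine IsDiscretePTorusOfRank.isDiscretePToral_of_le
      ⟨(S.equivMapOfInjective _ P.subtype_injective).symm.trans e⟩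
      ((Subgroup.map_subtype_le S).trans le_sup_left) (sup_le ?_ ?_)
      (relIndex_ne_zero_trans ?_ (P.relIndex_sup_ne_zero_of_finite F))
      (hPdpt.isPGroup.to_sup_of_normal_right (hT.isPGroup_torsion m))
    · simpa [normalizer_eq_top, ← MonoidHom.range_eq_map] using le_normalizer_map (H := S) P.subtype
    · exact fun y hy => centralizer_le_normalizer _ (mem_centralizer_iff.mpr fun z hz =>
        (hT.commute (hST hz) (hT.torsion_le m hy)).eq)
    · rw [relIndex, subgroupOf, comap_map_eq_self_of_injective P.subtype_injective]
      exact index_ne_zero_iff_finite.mpr hSfin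
  have hPF : P ⊔ F = P := hmax _ le_top hQ le_sup_left
  exact hPF ▸ mem_sup_right (show x ∈ F from ⟨hx, hm⟩)

theorem mem_of_pow_mem [Fact p.Prime] (hT : IsPToralCore p T) {P Q : Subgroup B}
    (hP : IsMaxDiscretePToral p P) (hQ : IsPGroup p Q) {x : B} (hx : x ∈ T) {j : ℕ}
    (hxQ : x ^ p ^ j ∈ Q) : x ∈ P := by
  obtain ⟨i, hi⟩ := hQ ⟨_, hxQ⟩
  exact hT.mem_of_pow_eq_one hP hx (m := j + i) <| by
    rw [pow_add, pow_mul]; exact congrArg Subtype.val hi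

theorem inf_le_of_isMaxDiscretePToral [Fact p.Prime] (hT : IsPToralCore p T) {P P' : Subgroup B}
    (hP : IsMaxDiscretePToral p P) (hP' : IsMaxDiscretePToral p P') : P ⊓ T ≤ P' :=
  fun x hx => hT.mem_of_pow_mem hP' hP.2.1.isPGroup hx.2 (j := 0) (by simpa using hx.1)

theorem commutatorElement_pow (hT : IsPToralCore p T) {σ : B} (hσ : σ ∈ T) (y : B) (n : ℕ) :
    ⁅σ, y⁆ ^ n = ⁅σ ^ n, y⁆ := by
  have hc := hT.commute hσ (hT.conj_mem (inv_mem hσ) y)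
  rw [commutatorElement_def, commutatorElement_def, mul_assoc σ, mul_assoc σ, hc.mul_pow,
    conj_pow, inv_pow]
  group

/-- With `σ ^ N = t`, `N` the index of `T ∩ P` in `P`, the commutator `y ↦ ⁅σ, y⁆` is a cocycle
with values in `T ∩ P` (its `N`-th power `⁅t, y⁆` lies in `T ∩ P`, which is root-closed in `T`),
and averaging it gives `m`. -/
theorem exists_mem_conj_eq [Fact p.Prime] (hT : IsPToralCore p T) {P : Subgroup B}
    (hP : IsMaxDiscretePToral p P) {t : B} (ht : t ∈ T) (htP : t ∈ normalizer (P : Set B)) :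
    ∃ m ∈ P, ∀ y ∈ P, t * y * t⁻¹ = m * y * m⁻¹ := by
  have := hT.normal
  have := hT.isMulCommutative
  have := hT.finiteIndex
  obtain ⟨j, hj⟩ := hT.exists_relIndex_eq_pow P
  obtain ⟨σ, hσ, rfl⟩ :=
    hT.exists_pow_eq t ht (T.relIndex P) (hj ▸ pow_ne_zero _ (Fact.out : p.Prime).ne_zero)
  let f : P → T := fun y =>
    ⟨⁅σ, (y : B)⁆, T.commutator_le_left ⊤ (commutator_mem_commutator hσ (mem_top _))⟩
  have hfP : ∀ y, f y ∈ P.subgroupOf T := fun y => by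
    refine hT.mem_of_pow_mem hP hP.2.1.isPGroup (f y).2 (j := j) ?_
    rw [← hj]
    show ⁅σ, (y : B)⁆ ^ T.relIndex P ∈ P
    rw [hT.commutatorElement_pow hσ]
    exact mul_mem ((mem_normalizer_iff.mp htP y).mp y.2) (inv_mem y.2)
  have hf : ∀ x y, f (x * y) = f x * MulAut.conjNormal (x : B) (f y) := fun x y => by
    ext; simp only [f, commutatorElement_def, coe_mul, MulAut.conjNormal_apply]; group
  have hK : ∀ k ∈ T.subgroupOf P, f k = 1 := fun k hk => by
    ext; exact commutatorElement_eq_one_iff_mul_comm.mpr (hT.commute hσ hk).eq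
  obtain ⟨m, hmP, hm⟩ := exists_pow_index_eq_div_of_cocycle
    (fun y : P => (MulAut.conjNormal (H := T) (y : B)).toMonoidHom) hf (T.subgroupOf P) hK _ hfP
  refine ⟨m, hmP, fun y hy => ?_⟩
  have h := congrArg Subtype.val (hm ⟨y, hy⟩)
  simp only [f, SubgroupClass.coe_pow, coe_div, MulEquiv.coe_toMonoidHom,
    MulAut.conjNormal_apply] at h
  change ⁅σ, y⁆ ^ T.relIndex P = _ at h
  rw [hT.commutatorElement_pow hσ, commutatorElement_def] at h
  rw [mul_inv_eq_iff_eq_mul.mp h, div_eq_mul_inv]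
  group

theorem mem_centralizer_mul_of_mem_normalizer [Fact p.Prime] (hT : IsPToralCore p T)
    {P : Subgroup B} (hP : IsMaxDiscretePToral p P) {t : B} (ht : t ∈ T)
    (htP : t ∈ normalizer (P : Set B)) : t ∈ (centralizer (P : Set B) : Set B) * P := by
  obtain ⟨m, hm, hconj⟩ := hT.exists_mem_conj_eq hP ht htP
  refine ⟨t * m⁻¹, mem_centralizer_iff.mpr fun y hy => ?_, m, hm, by group⟩
  have h := hconj _ (mul_mem (mul_mem (inv_mem hm) hy) hm)
  calc y * (t * m⁻¹) = m * (m⁻¹ * y * m) * m⁻¹ * (t * m⁻¹) := by group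
    _ = t * m⁻¹ * y := by rw [← h]; group

theorem exists_inv_mul_mem_and_cocycle (hT : IsPToralCore p T) {P' : Subgroup B}
    (hTP' : T ⊔ P' = ⊤) (P : Subgroup B) : ∃ s : P → T, (∀ y, (s y : B)⁻¹ * y ∈ P') ∧
      ∀ x y, ((s x : B) * (x * s y * (x : B)⁻¹))⁻¹ * s (x * y) ∈ P' := by
  have := hT.normal
  have hdec : ∀ y : P, ∃ s : T, (s : B)⁻¹ * y ∈ P' := fun y => by
    have : (y : B) ∈ (T : Set B) * P' := by rw [← normal_mul, hTP']; trivial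
    obtain ⟨s, hs, a, ha, h⟩ := this
    exact ⟨⟨s, hs⟩, by simpa [← h]⟩
  choose s hs using hdec
  refine ⟨s, hs, fun x y => ?_⟩
  have hc := hT.commute (s x).2 (hT.conj_mem (s y).2 x)
  have e : ((s x : B) * (x * s y * (x : B)⁻¹))⁻¹ * s (x * y) =
      ((s x : B)⁻¹ * x) * ((s y : B)⁻¹ * y) * ((s (x * y) : B)⁻¹ * (x * y))⁻¹ := by
    rw [hc.eq]; group
  have hxy := hs (x * y)
  rw [coe_mul] at hxy
  rw [e]
  exact mul_mem (mul_mem (hs x) (hs y)) (inv_mem hxy)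

/-- `τ` is the average of the cocycle of `exists_inv_mul_mem_and_cocycle`, taken modulo
`T ∩ P'`. -/
theorem exists_inv_pow_relIndex_mul_mem [Fact p.Prime] (hT : IsPToralCore p T)
    {P P' : Subgroup B} (hP : IsMaxDiscretePToral p P) (hP' : IsMaxDiscretePToral p P')
    (hTP' : T ⊔ P' = ⊤) : ∃ τ ∈ T, ∀ y ∈ P, ∃ s ∈ T,
      s⁻¹ * y ∈ P' ∧ (s ^ T.relIndex P)⁻¹ * (τ * (y * τ * y⁻¹)⁻¹) ∈ P' := by
  have := hT.normal
  have := hT.isMulCommutative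
  have := hT.finiteIndex
  obtain ⟨s, hs, hf⟩ := hT.exists_inv_mul_mem_and_cocycle hTP' P
  have hρ : ∀ y : P, P'.subgroupOf T ≤
      (P'.subgroupOf T).comap (MulAut.conjNormal (H := T) (y : B)).toMonoidHom := fun y x hx => by
    simp only [mem_comap, mem_subgroupOf, MulEquiv.coe_toMonoidHom, MulAut.conjNormal_apply] at hx ⊢
    have hxP : (x : B) ∈ P := hT.inf_le_of_isMaxDiscretePToral hP' hP (mem_inf.mpr ⟨hx, x.2⟩)
    exact hT.inf_le_of_isMaxDiscretePToral hP hP'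
      (mem_inf.mpr ⟨mul_mem (mul_mem y.2 hxP) (inv_mem y.2), hT.conj_mem x.2 y⟩)
  have hK : ∀ k ∈ T.subgroupOf P, s k ∈ P'.subgroupOf T := by
    intro k hk
    rw [mem_subgroupOf]
    simpa using
      mul_mem (hT.inf_le_of_isMaxDiscretePToral hP hP' (mem_inf.mpr ⟨k.2, hk⟩)) (inv_mem (hs k))
  obtain ⟨τ, hτ⟩ := exists_pow_index_eq_div_mod_of_cocycle _ _ hρ (f := s)
    (fun x y => by simpa [mem_subgroupOf] using hf x y) (T.subgroupOf P) hK
  refine ⟨τ, τ.2, fun y hy => ⟨s ⟨y, hy⟩, (s ⟨y, hy⟩).2, hs ⟨y, hy⟩, ?_⟩⟩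
  have h := hτ ⟨y, hy⟩
  change (s ⟨y, hy⟩ ^ T.relIndex P)⁻¹ * _ ∈ _ at h
  simpa [div_eq_mul_inv, mem_subgroupOf] using h

/-- For `σ ^ N = τ`, the `N`-th power of `D = s⁻¹ * σ * (y * σ * y⁻¹)⁻¹ ∈ T` lies in `P'`,
hence so does `D`, and `σ⁻¹ * y * σ = D⁻¹ * (s⁻¹ * y)`. -/
theorem exists_map_conj_eq [Fact p.Prime] (hT : IsPToralCore p T) {P P' : Subgroup B}
    (hP : IsMaxDiscretePToral p P) (hP' : IsMaxDiscretePToral p P') (hTP' : T ⊔ P' = ⊤) :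
    ∃ σ ∈ T, P.map (MulAut.conj σ).toMonoidHom = P' := by
  have := hT.normal
  have := hT.isMulCommutative
  obtain ⟨j, hj⟩ := hT.exists_relIndex_eq_pow P
  obtain ⟨τ, hτ, hτP'⟩ := hT.exists_inv_pow_relIndex_mul_mem hP hP' hTP'
  obtain ⟨σ, hσ, rfl⟩ := hT.exists_pow_eq τ hτ _ (hj ▸ pow_ne_zero _ (Fact.out : p.Prime).ne_zero)
  refine ⟨σ⁻¹, inv_mem hσ, ((hP.map (MulAut.conj σ⁻¹)).2.2 P' ?_ hP'.2.1 ?_).symm⟩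
  · rw [map_top_of_surjective _ (MulAut.conj σ⁻¹).surjective]; exact le_top
  rintro _ ⟨y, hy, rfl⟩
  obtain ⟨s, hs, hsy, hsN⟩ := hτP' y hy
  let D : T := ⟨s, hs⟩⁻¹ * ⟨σ, hσ⟩ * (MulAut.conjNormal y ⟨σ, hσ⟩)⁻¹
  have hD : (D : B) ∈ P' := by
    refine hT.mem_of_pow_mem hP' hP'.2.1.isPGroup D.2 (j := j) ?_
    rw [← hj, ← SubgroupClass.coe_pow]
    simpa [D, mul_pow, inv_pow, ← map_pow, mul_assoc] using hsN
  have hc := (hT.commute (hT.conj_mem hσ y) (inv_mem hσ)).eq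
  show σ⁻¹ * y * σ⁻¹⁻¹ ∈ P'
  have e : σ⁻¹ * y * σ⁻¹⁻¹ = (D : B)⁻¹ * (s⁻¹ * y) := by
    calc _ = σ⁻¹ * (y * σ * y⁻¹) * y := by group
      _ = y * σ * y⁻¹ * σ⁻¹ * y := by rw [← hc]
      _ = _ := by simp [D]; group
  rw [e]
  exact mul_mem (inv_mem hD) hsy

end IsPToralCore

/-! ### `p`-toral groups and their `p`-discretizations -/

section Topology

variable {G : Type*} [Group G] [TopologicalSpace G] [IsTopologicalGroup G]

theorem Subgroup.normalizer_le_normalizer_topologicalClosure (P : Subgroup G) :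
    normalizer (P : Set G) ≤ normalizer (P.topologicalClosure : Set G) := by
  have key : ∀ n ∈ normalizer (P : Set G), ∀ h ∈ P.topologicalClosure,
      n * h * n⁻¹ ∈ P.topologicalClosure := fun n hn h hh =>
    map_mem_closure (f := fun h => n * h * n⁻¹) (IsTopologicalGroup.continuous_conj n) hh
      fun y hy => (mem_normalizer_iff.mp hn y).mp hy
  refine fun n hn => mem_normalizer_iff.mpr fun h => ⟨key n hn h, fun H => ?_⟩
  simpa [mul_assoc] using key n⁻¹ (inv_mem hn) _ H

theorem Subgroup.centralizer_topologicalClosure [T2Space G] (P : Subgroup G) :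
    centralizer (P.topologicalClosure : Set G) = centralizer (P : Set G) := by
  refine le_antisymm (centralizer_le P.le_topologicalClosure) fun c hc => ?_
  have hP : (P : Set G) ⊆ Set.centralizer {c} := fun y hy m hm => by
    rw [Set.mem_singleton_iff.mp hm]; exact (mem_centralizer_iff.mp hc y hy).symm
  exact mem_centralizer_iff.mpr fun h hh =>
    (closure_minimal hP (Set.isClosed_centralizer _) hh c rfl).symm

theorem Subgroup.map_topologicalClosure_le {G' : Type*} [Group G'] [TopologicalSpace G']
    [IsTopologicalGroup G'] (f : G →* G') (hf : Continuous f) (P : Subgroup G) :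
    P.topologicalClosure.map f ≤ (P.map f).topologicalClosure := by
  rintro _ ⟨x, hx, rfl⟩
  exact map_mem_closure hf hx fun y hy => ⟨y, hy, rfl⟩

theorem Subgroup.sup_eq_top_of_isOpen {U D : Subgroup G} (hU : IsOpen (U : Set G))
    (hD : D.topologicalClosure = ⊤) : U ⊔ D = ⊤ := by
  rw [eq_top_iff, ← hD]
  exact topologicalClosure_minimal D le_sup_right
    (isClosed_of_isOpen _ (isOpen_mono le_sup_left hU))

theorem Subgroup.topologicalClosure_subgroupOf_eq_top {P B : Subgroup G}
    (h : P.topologicalClosure = B) : (P.subgroupOf B).topologicalClosure = ⊤ := by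
  have hPB : P ≤ B := h ▸ P.le_topologicalClosure
  refine eq_top_iff.mpr fun x _ => ?_
  rw [← SetLike.mem_coe, topologicalClosure_coe,
    Topology.IsInducing.subtypeVal.closure_eq_preimage_closure_image]
  have hx : (x : G) ∈ _root_.closure (P : Set G) := by rw [← topologicalClosure_coe, h]; exact x.2
  refine _root_.closure_mono (fun y hy => ?_) hx
  exact ⟨⟨y, hPB hy⟩, hy, rfl⟩

end Topology

namespace IsPToral

variable {p : ℕ} {K : Type*} [Group K] [TopologicalSpace K] [IsTopologicalGroup K]

theorem isPToralCore [Fact p.Prime] (h : IsPToral p K) :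
    IsPToralCore p (connectedComponentOfOne K) := by
  obtain ⟨-, r, hT, hN, hfin, hq⟩ := h
  have hp := (Fact.out : p.Prime).ne_zero
  refine ⟨hN, hT.isMulCommutative, fun x hx n hn => ?_,
    fun m => hT.finite_setOf_pow_eq_one (pow_ne_zero m hp), IsPGroup.iff_card.mp hq⟩
  obtain ⟨y, hy⟩ := hT.exists_pow_eq ⟨x, hx⟩ hn
  exact ⟨y, y.2, congrArg Subtype.val hy⟩

theorem sup_eq_top (h : IsPToral p K) {D : Subgroup K} (hD : D.topologicalClosure = ⊤) :
    connectedComponentOfOne K ⊔ D = ⊤ := by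
  obtain ⟨-, -, -, -, hfin, -⟩ := h
  have : (connectedComponentOfOne K).FiniteIndex := finiteIndex_of_finite_quotient
  exact sup_eq_top_of_isOpen (isOpen_of_isClosed_of_finiteIndex _ isClosed_connectedComponent) hD

theorem mem_centralizer_mul_of_mem_normalizer [Fact p.Prime] (h : IsPToral p K)
    {D : Subgroup K} (hD : IsMaxDiscretePToral p D) (hDd : D.topologicalClosure = ⊤) {b : K}
    (hb : b ∈ normalizer (D : Set K)) : b ∈ (centralizer (D : Set K) : Set K) * D := by
  have hT := h.isPToralCore
  have := hT.normal
  have hb' : b ∈ ((connectedComponentOfOne K ⊔ D : Subgroup K) : Set K) := by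
    rw [h.sup_eq_top hDd]; trivial
  rw [normal_mul] at hb'
  obtain ⟨t, ht, a, ha, rfl⟩ := hb'
  have htN : t ∈ normalizer (D : Set K) := by
    simpa using mul_mem hb (inv_mem (le_normalizer ha))
  obtain ⟨c, hc, a', ha', rfl⟩ := hT.mem_centralizer_mul_of_mem_normalizer hD ht htN
  exact ⟨c, hc, a' * a, mul_mem ha' ha, (mul_assoc _ _ _).symm⟩

end IsPToral

namespace IsPDiscretizationOf

variable {p : ℕ} {G : Type*} [Group G] [TopologicalSpace G] [IsTopologicalGroup G]
  {P Pbold : Subgroup G}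

theorem mem_centralizer_mul_of_mem_normalizer [Fact p.Prime] (hPb : IsPToral p Pbold)
    (hP : IsPDiscretizationOf p P Pbold) {b : G} (hb : b ∈ Pbold)
    (hbN : b ∈ normalizer (P : Set G)) : b ∈ (centralizer (P : Set G) : Set G) * P := by
  obtain ⟨c, hc, a, ha, hca⟩ := hPb.mem_centralizer_mul_of_mem_normalizer
    hP.2.isMaxDiscretePToral_subgroupOf (topologicalClosure_subgroupOf_eq_top hP.1)
    (b := ⟨b, hb⟩) (le_normalizer_comap Pbold.subtype hbN)
  refine ⟨c, mem_centralizer_iff.mpr fun y hy => ?_, a, ha, congrArg Subtype.val hca⟩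
  exact congrArg Subtype.val (mem_centralizer_iff.mp hc ⟨y, hP.2.1 hy⟩ hy)

theorem exists_map_conj_eq [Fact p.Prime] (hPb : IsPToral p Pbold)
    (hP : IsPDiscretizationOf p P Pbold) {P' : Subgroup G} (hP' : IsPDiscretizationOf p P' Pbold) :
    ∃ σ ∈ Pbold, P.map (MulAut.conj σ).toMonoidHom = P' := by
  obtain ⟨σ, -, hσ⟩ := hPb.isPToralCore.exists_map_conj_eq hP.2.isMaxDiscretePToral_subgroupOf
    hP'.2.isMaxDiscretePToral_subgroupOf
    (hPb.sup_eq_top (topologicalClosure_subgroupOf_eq_top hP'.1))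
  refine ⟨σ, σ.2, ?_⟩
  have hcomm : Pbold.subtype.comp (MulAut.conj σ).toMonoidHom =
      (MulAut.conj (σ : G)).toMonoidHom.comp Pbold.subtype := MonoidHom.ext fun _ => rfl
  have := congrArg (map Pbold.subtype) hσ
  rwa [map_map, hcomm, ← map_map, subgroupOf_map_subtype, subgroupOf_map_subtype,
    inf_of_le_left hP.2.1, inf_of_le_left hP'.2.1] at this

theorem map_conj (hP : IsPDiscretizationOf p P Pbold) {g : G}
    (hg : g ∈ normalizer (Pbold : Set G)) :
    IsPDiscretizationOf p (P.map (MulAut.conj g).toMonoidHom) Pbold := by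
  have hgB : Pbold.map (MulAut.conj g).toMonoidHom = Pbold := mem_normalizer_iff_map_conj_eq.mp hg
  obtain ⟨hcl, hmax⟩ := hP
  refine ⟨le_antisymm (topologicalClosure_minimal _ (hgB ▸ map_mono hmax.1)
    (hcl ▸ isClosed_topologicalClosure P)) ?_, hgB ▸ hmax.map (MulAut.conj g)⟩
  calc Pbold = P.topologicalClosure.map (MulAut.conj g).toMonoidHom := by rw [hcl, hgB]
    _ ≤ _ := map_topologicalClosure_le _ (IsTopologicalGroup.continuous_conj g) P

end IsPDiscretizationOf

theorem out_iso_of_pDiscretization_general (p : ℕ) [Fact p.Prime] {G : Type*}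
    [Group G] [TopologicalSpace G] [IsTopologicalGroup G] [T2Space G]
    (Pbold P : Subgroup G) (hPbold : IsPToralSubgroup p Pbold)
    (hP : IsPDiscretizationOf p P Pbold) :
    Subgroup.normalizer (P : Set G) ≤ Subgroup.normalizer (Pbold : Set G) ∧
    Subgroup.centralizer (P : Set G) = Subgroup.centralizer (Pbold : Set G) ∧
    (∀ n ∈ Subgroup.normalizer (P : Set G),
      n ∈ (Subgroup.centralizer (Pbold : Set G) : Set G) * (Pbold : Set G) →
        n ∈ (Subgroup.centralizer (P : Set G) : Set G) * (P : Set G)) ∧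
    (∀ g ∈ Subgroup.normalizer (Pbold : Set G), ∃ n ∈ Subgroup.normalizer (P : Set G),
      n⁻¹ * g ∈ (Subgroup.centralizer (Pbold : Set G) : Set G) * (Pbold : Set G)) := by
  have hcent : centralizer (P : Set G) = centralizer (Pbold : Set G) := by
    rw [← hP.1, centralizer_topologicalClosure]
  refine ⟨hP.1 ▸ P.normalizer_le_normalizer_topologicalClosure, hcent, ?_, fun g hg => ?_⟩
  · rintro n hn ⟨c, hc, b, hb, rfl⟩
    rw [← hcent] at hc
    obtain ⟨c', hc', a, ha, rfl⟩ := hP.mem_centralizer_mul_of_mem_normalizer hPbold.2 hb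
      (by simpa using mul_mem (inv_mem (centralizer_le_normalizer _ hc)) hn)
    exact ⟨c * c', mul_mem hc hc', a, ha, mul_assoc _ _ _⟩
  obtain ⟨σ, hσ, hσP⟩ := hP.exists_map_conj_eq hPbold.2 (hP.map_conj hg)
  refine ⟨σ⁻¹ * g, mem_normalizer_iff.mpr fun y => ?_, 1, one_mem _, g⁻¹ * σ * g,
    (mem_normalizer_iff''.mp hg σ).mp hσ, by group⟩
  have := SetLike.ext_iff.mp hσP (g * y * g⁻¹)
  simp only [mem_map_equiv, MulAut.conj_symm_apply] at this
  simpa [mul_assoc] using this.symm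

/-- Let `G` be a compact Lie group and `P` a `p`-discretization of a
`p`-toral subgroup `𝐏` of `G`.  Then the natural map `Out_G(P) → Out_G(𝐏)` induced by
the inclusion `N_G(P) ⊆ N_G(𝐏)` (where `C_G(P) = C_G(𝐏)`) is a group isomorphism;
this is expressed at the level of cosets of the denominators `C_G(P)·P` and
`C_G(𝐏)·𝐏`. -/
theorem out_iso_of_pDiscretization (p : ℕ) [Fact p.Prime] {E M G : Type*} [NormedAddCommGroup E] [NormedSpace ℝ E] [FiniteDimensional ℝ E]
    [TopologicalSpace M] {I : ModelWithCorners ℝ E M}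
    [Group G] [TopologicalSpace G] [ChartedSpace M G] [IsTopologicalGroup G] [LieGroup I (⊤ : ℕ∞) G]
    [CompactSpace G] [T2Space G]
    (Pbold P : Subgroup G) (hPbold : IsPToralSubgroup p Pbold)
    (hP : IsPDiscretizationOf p P Pbold) :
    Subgroup.normalizer (P : Set G) ≤ Subgroup.normalizer (Pbold : Set G) ∧
    Subgroup.centralizer (P : Set G) = Subgroup.centralizer (Pbold : Set G) ∧
    (∀ n ∈ Subgroup.normalizer (P : Set G),
      n ∈ (Subgroup.centralizer (Pbold : Set G) : Set G) * (Pbold : Set G) →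
        n ∈ (Subgroup.centralizer (P : Set G) : Set G) * (P : Set G)) ∧
    (∀ g ∈ Subgroup.normalizer (Pbold : Set G), ∃ n ∈ Subgroup.normalizer (P : Set G),
      n⁻¹ * g ∈ (Subgroup.centralizer (Pbold : Set G) : Set G) * (Pbold : Set G)) :=
  out_iso_of_pDiscretization_general p Pbold P hPbold hP

end
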